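/- arXiv:2203.15945 — 2 statements merged into one kernel-verified Lean document; each statement's English description precedes it below -/
import Mathlib

section
/- Let η = N(m, V) be a nondegenerate Gaussian measure on ℝ^d with mean m and positive-definite covariance V. Then η is (2, 1.78²·V)-exponentially controlled; that is, inf_{θ'} log ∫ exp(‖(1.78²·V)^{-1/2}(θ − θ')‖₂²) η(dθ) ≤ d/2. -/
/-!
Centre the infimum at `θ' = m`. Since `‖(c²V)^{-1/2} x‖² = xᵀV⁻¹x / c²`, the integral is the moment
generating function `𝔼 exp(t χ²_d) = (1 - 2t)^{-d/2}` of the chi-square variable `(θ - m)ᵀV⁻¹(θ - m)`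
at `t = 1/c²`; it is computed by substituting `θ - m = V^{1/2} y`, which splits the integral into `d`
one-dimensional Gaussian integrals. Its logarithm `-(d/2) log(1 - 2/c²)` is at most `d/2` as soon as
`1 - 2/c² ≥ 1/e`, i.e. `c² ≥ 2e/(e - 1) ≈ 3.164`, and `1.78² ≈ 3.168`.
-/

open MeasureTheory ENNReal Matrix

noncomputable section

/-- The Euclidean (ℓ²) norm of a vector in ℝ^d. -/
def euclNorm {d : ℕ} (v : Fin d → ℝ) : ℝ := Real.sqrt (∑ i, v i ^ 2)

/-- The inverse square root `Σ^{-1/2}` of a positive-definite matrix `Σ`. -/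
def invSqrt {d : ℕ} (S : Matrix (Fin d) (Fin d) ℝ) (hS : S.PosDef) :
    Matrix (Fin d) (Fin d) ℝ :=
  (hS.posSemidef.1.eigenvectorUnitary *
    diagonal (fun i => Real.sqrt (hS.posSemidef.1.eigenvalues i)) *
    (star hS.posSemidef.1.eigenvectorUnitary : Matrix (Fin d) (Fin d) ℝ))⁻¹

/-- A measure `η` on ℝ^d is `(p, Σ)`-exponentially controlled if
`inf_{θ'} log ∫ exp(‖Σ^{-1/2}(θ - θ')‖₂^p) η(dθ) ≤ d/2`. -/
def ExpControlled {d : ℕ} (p : ℝ) (S : Matrix (Fin d) (Fin d) ℝ) (hS : S.PosDef)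
    (η : Measure (Fin d → ℝ)) : Prop :=
  ⨅ θ' : Fin d → ℝ,
    ENNReal.log (∫⁻ θ,
      ENNReal.ofReal (Real.exp (euclNorm ((invSqrt S hS).mulVec (θ - θ')) ^ p)) ∂η)
    ≤ ((d : ℝ) / 2 : EReal)

/-- The (nondegenerate) Gaussian measure `N(m, V)` on ℝ^d, defined by its Lebesgue density
`θ ↦ ((2π)^d det V)^{-1/2} exp(-(θ-m)ᵀ V⁻¹ (θ-m) / 2)`. -/
def gaussianMeasure {d : ℕ} (m : Fin d → ℝ) (V : Matrix (Fin d) (Fin d) ℝ) :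
    Measure (Fin d → ℝ) :=
  volume.withDensity fun θ =>
    ENNReal.ofReal ((Real.sqrt ((2 * Real.pi) ^ d * V.det))⁻¹ *
      Real.exp (-((θ - m) ⬝ᵥ V⁻¹.mulVec (θ - m)) / 2))

open scoped MatrixOrder
open Real

namespace Matrix

variable {ι : Type*} [Fintype ι]

lemma mulVec_dotProduct_mulVec_mulVec (A M : Matrix ι ι ℝ) (x y : ι → ℝ) :
    (A *ᵥ x) ⬝ᵥ M *ᵥ (A *ᵥ y) = x ⬝ᵥ (Aᵀ * M * A) *ᵥ y := by
  rw [dotProduct_mulVec, ← vecMul_transpose, vecMul_vecMul, ← dotProduct_mulVec, mulVec_mulVec]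

variable [DecidableEq ι]

lemma transpose_cfcSqrt (A : Matrix ι ι ℝ) : (CFC.sqrt A)ᵀ = CFC.sqrt A := by
  simpa using (CFC.sqrt_nonneg A).posSemidef.isHermitian.eq

lemma cfcSqrt_mul_inv_mul_cfcSqrt {V : Matrix ι ι ℝ} (hV : V.PosDef) :
    CFC.sqrt V * V⁻¹ * CFC.sqrt V = 1 := by
  have hB := (isUnit_iff_isUnit_det _).mp hV.isStrictlyPositive.sqrt.isUnit
  nth_rw 2 [← CFC.sqrt_mul_sqrt_self V hV.posSemidef.nonneg]
  rw [Matrix.mul_inv_rev, ← Matrix.mul_assoc, mul_nonsing_inv _ hB, Matrix.one_mul,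
    nonsing_inv_mul _ hB]

end Matrix

lemma euclNorm_sq {d : ℕ} (v : Fin d → ℝ) : euclNorm v ^ 2 = v ⬝ᵥ v := by
  rw [euclNorm, sq_sqrt (by positivity)]
  simp only [dotProduct, sq]

lemma invSqrt_eq_cfcSqrt_inv {d : ℕ} {S : Matrix (Fin d) (Fin d) ℝ} (hS : S.PosDef) :
    invSqrt S hS = CFC.sqrt S⁻¹ := by
  rw [invSqrt, ← hS.posSemidef.inv_sqrt, CFC.sqrt_eq_real_sqrt S hS.posSemidef.nonneg,
    cfcₙ_eq_cfc, hS.1.cfc_eq]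
  rfl

lemma euclNorm_invSqrt_mulVec_sq {d : ℕ} {S : Matrix (Fin d) (Fin d) ℝ} (hS : S.PosDef)
    (x : Fin d → ℝ) : euclNorm (invSqrt S hS *ᵥ x) ^ 2 = x ⬝ᵥ S⁻¹ *ᵥ x := by
  rw [euclNorm_sq]
  nth_rw 2 [← one_mulVec (invSqrt S hS *ᵥ x)]
  rw [mulVec_dotProduct_mulVec_mulVec, invSqrt_eq_cfcSqrt_inv, transpose_cfcSqrt, Matrix.mul_one,
    CFC.sqrt_mul_sqrt_self _ hS.inv.posSemidef.nonneg]

section GaussianIntegral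

variable {ι : Type*} [Fintype ι]

lemma integral_exp_neg_mul_dotProduct_self (α : ℝ) :
    ∫ x : ι → ℝ, exp (-α * (x ⬝ᵥ x)) = √(π / α) ^ Fintype.card ι := by
  simp_rw [dotProduct, ← sq, Finset.mul_sum, exp_sum]
  rw [volume_pi, integral_fintype_prod_eq_pow (fun t : ℝ => exp (-α * t ^ 2)), integral_gaussian]

variable [DecidableEq ι]

lemma integral_comp_mulVec {E : Type*} [NormedAddCommGroup E] [NormedSpace ℝ E]
    {B : Matrix ι ι ℝ} (hB : B.det ≠ 0) (f : (ι → ℝ) → E) :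
    ∫ x, f (B *ᵥ x) = |B.det|⁻¹ • ∫ x, f x := by
  have hT : MeasurableEmbedding (B *ᵥ ·) :=
    (toLinearEquiv' B (invertibleOfIsUnitDet B hB.isUnit)).toContinuousLinearEquiv
      |>.toHomeomorph.measurableEmbedding
  rw [← hT.integral_map]
  change ∫ y, f y ∂(Measure.map (toLin' B) volume) = _
  rw [Real.map_matrix_volume_pi_eq_smul_volume_pi hB,
    integral_smul_measure, ENNReal.toReal_ofReal (abs_nonneg _), abs_inv]

lemma integral_exp_neg_mul_dotProduct_inv_mulVec {V : Matrix ι ι ℝ} (hV : V.PosDef) (α : ℝ) :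
    ∫ x, exp (-α * (x ⬝ᵥ V⁻¹ *ᵥ x)) = √V.det * √(π / α) ^ Fintype.card ι := by
  have hdet : (CFC.sqrt V).det = √V.det := by
    rw [hV.posSemidef.det_sqrt, RCLike.sqrt_real]
  have hdet_pos : 0 < √V.det := sqrt_pos.mpr hV.det_pos
  have key := integral_comp_mulVec (hdet ▸ hdet_pos.ne') fun x => exp (-α * (x ⬝ᵥ V⁻¹ *ᵥ x))
  simp_rw [mulVec_dotProduct_mulVec_mulVec, transpose_cfcSqrt, cfcSqrt_mul_inv_mul_cfcSqrt hV,
    one_mulVec, hdet, abs_of_pos hdet_pos] at key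
  rw [← integral_exp_neg_mul_dotProduct_self, key, smul_eq_mul, mul_inv_cancel_left₀ hdet_pos.ne']

end GaussianIntegral

lemma inv_sqrt_mul_sqrt_mul_sqrt_pi_div_pow {D t : ℝ} (hD : 0 < D) (ht : t < 1 / 2) (d : ℕ) :
    (√((2 * π) ^ d * D))⁻¹ * (√D * √(π / (1 / 2 - t)) ^ d) = (1 - 2 * t) ^ (-(d : ℝ) / 2) := by
  have h2π : 0 < 2 * π := by positivity
  have h12t : 0 < 1 - 2 * t := by linarith
  have hZ : √((2 * π) ^ d * D) = √(2 * π) ^ d * √D := by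
    have : (2 * π) ^ d = (√(2 * π) ^ d) ^ 2 := by rw [pow_right_comm, sq_sqrt h2π.le]
    rw [this, sqrt_mul (by positivity), sqrt_sq (by positivity)]
  have hπ : √(π / (1 / 2 - t)) = √(2 * π) * √((1 - 2 * t)⁻¹) := by
    rw [← sqrt_mul h2π.le]
    congr 1
    field_simp
  rw [hZ, hπ, mul_pow, sqrt_eq_rpow (1 - 2 * t)⁻¹, ← Real.rpow_mul_natCast (inv_pos.mpr h12t).le,
    Real.inv_rpow h12t.le, ← rpow_neg h12t.le]
  field_simp

lemma lintegral_exp_mul_gaussianMeasure {d : ℕ} (m : Fin d → ℝ) {V : Matrix (Fin d) (Fin d) ℝ}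
    (hV : V.PosDef) {t : ℝ} (ht : t < 1 / 2) :
    ∫⁻ θ, ENNReal.ofReal (exp (t * ((θ - m) ⬝ᵥ V⁻¹ *ᵥ (θ - m)))) ∂gaussianMeasure m V =
      ENNReal.ofReal ((1 - 2 * t) ^ (-(d : ℝ) / 2)) := by
  set Z := √((2 * π) ^ d * V.det)
  set α := 1 / 2 - t
  have hα : 0 < α := by simp only [α]; linarith
  have hint : Integrable fun x => exp (-α * (x ⬝ᵥ V⁻¹ *ᵥ x)) := by
    refine Integrable.of_integral_ne_zero ?_
    rw [integral_exp_neg_mul_dotProduct_inv_mulVec hV]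
    have := hV.det_pos
    positivity
  have hdensity : ∀ θ, ENNReal.ofReal (Z⁻¹ * exp (-((θ - m) ⬝ᵥ V⁻¹ *ᵥ (θ - m)) / 2)) *
      ENNReal.ofReal (exp (t * ((θ - m) ⬝ᵥ V⁻¹ *ᵥ (θ - m)))) =
      ENNReal.ofReal (Z⁻¹ * exp (-α * ((θ - m) ⬝ᵥ V⁻¹ *ᵥ (θ - m)))) := by
    intro θ
    rw [← ENNReal.ofReal_mul (by positivity), mul_assoc, ← exp_add]
    simp only [α]
    ring_nf
  rw [gaussianMeasure, lintegral_withDensity_eq_lintegral_mul _ (by fun_prop) (by fun_prop)]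
  simp only [Pi.mul_apply]
  rw [lintegral_congr hdensity,
    ← ofReal_integral_eq_lintegral_ofReal ((hint.comp_sub_right m).const_mul _)
      (.of_forall fun _ => by positivity), integral_const_mul,
    integral_sub_right_eq_self (fun x => exp (-α * (x ⬝ᵥ V⁻¹ *ᵥ x))),
    integral_exp_neg_mul_dotProduct_inv_mulVec hV, Fintype.card_fin]
  congr 1
  exact inv_sqrt_mul_sqrt_mul_sqrt_pi_div_pow hV.det_pos ht d

lemma exp_neg_one_le_one_sub_two_mul_inv {a : ℝ} (ha : 2 * exp 1 / (exp 1 - 1) ≤ a) :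
    exp (-1) ≤ 1 - 2 * a⁻¹ := by
  have he : 0 < exp 1 - 1 := by linarith [exp_one_gt_two]
  have ha_inv : a⁻¹ ≤ (exp 1 - 1) / (2 * exp 1) := by
    rwa [inv_le_comm₀ ((div_pos (by positivity) he).trans_le ha) (by positivity), inv_div]
  calc exp (-1) = 1 - 2 * ((exp 1 - 1) / (2 * exp 1)) := by rw [exp_neg]; field_simp; ring
    _ ≤ 1 - 2 * a⁻¹ := by linarith

theorem expControlled_gaussianMeasure {d : ℕ} (m : Fin d → ℝ) {V : Matrix (Fin d) (Fin d) ℝ}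
    (hV : V.PosDef) {c : ℝ} (hc : 2 * exp 1 / (exp 1 - 1) ≤ c ^ 2) (hS : (c ^ 2 • V).PosDef) :
    ExpControlled 2 (c ^ 2 • V) hS (gaussianMeasure m V) := by
  have he : 0 < exp 1 - 1 := by linarith [exp_one_gt_two]
  have hc2 : 0 < c ^ 2 := (div_pos (by positivity) he).trans_le hc
  have hexp := exp_neg_one_le_one_sub_two_mul_inv hc
  have h12t : 0 < 1 - 2 * (c ^ 2)⁻¹ := (exp_pos _).trans_le hexp
  have hlog : -1 ≤ Real.log (1 - 2 * (c ^ 2)⁻¹) := (le_log_iff_exp_le h12t).mpr hexp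
  have hS_inv : (c ^ 2 • V)⁻¹ = (c ^ 2)⁻¹ • V⁻¹ := by
    let := invertibleOfNonzero hc2.ne'
    rw [inv_smul _ _ ((isUnit_iff_isUnit_det V).mp hV.isUnit), invOf_eq_inv]
  refine iInf_le_of_le m ?_
  simp_rw [Real.rpow_two, euclNorm_invSqrt_mulVec_sq, hS_inv, smul_mulVec, dotProduct_smul,
    smul_eq_mul]
  rw [lintegral_exp_mul_gaussianMeasure m hV (by linarith),
    ENNReal.log_ofReal_of_pos (rpow_pos_of_pos h12t _), Real.log_rpow h12t]
  have hd : (0 : ℝ) ≤ d := d.cast_nonneg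
  exact EReal.coe_le_coe_iff.mpr
    (by nlinarith : -(d : ℝ) / 2 * Real.log (1 - 2 * (c ^ 2)⁻¹) ≤ d / 2)

lemma two_mul_exp_one_div_le : 2 * exp 1 / (exp 1 - 1) ≤ (1.78 : ℝ) ^ 2 := by
  have := exp_one_gt_d9
  rw [div_le_iff₀ (by linarith)]
  norm_num
  linarith

/-- a nondegenerate Gaussian measure `N(m, V)` on ℝ^d is
`(2, 1.78² V)`-exponentially controlled. -/
theorem gaussian_expControlled {d : ℕ} (m : Fin d → ℝ)
    (V : Matrix (Fin d) (Fin d) ℝ) (hV : V.PosDef)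
    (hS : ((1.78 : ℝ) ^ 2 • V).PosDef) :
    ExpControlled 2 ((1.78 : ℝ) ^ 2 • V) hS (gaussianMeasure m V) :=
  expControlled_gaussianMeasure m hV two_mul_exp_one_div_le hS
end
end

section
/- Fix r ≥ 0, C_E > 0, and window sizes W_conv > 0 and W_opt ≥ W_conv. Let χ := 1 + (1 + r)^{−1/2} and g(r) := (2 + r + 2√(1 + r))/(1 + r). Let j* := ⌈ log(W_opt / W_conv) / log χ ⌉. Then the total cost of the geometric checking schedule is bounded by g(r) times the optimal cost: C_E·( r·χ^{j*}·W_conv + W_conv + Σ_{j=1}^{j*} χ^j·W_conv ) ≤ g(r) · C_E·( r·W_opt + W_conv + W_opt ). -/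
/-- fix `r ≥ 0`, `C_E > 0`, window sizes `0 < W_conv ≤ W_opt`. Let
`χ = 1 + (1 + r)^{-1/2}`, `g(r) = (2 + r + 2√(1 + r))/(1 + r)`, and
`j* = ⌈log(W_opt / W_conv) / log χ⌉`. Then the total cost of the geometric checking
schedule is bounded by `g(r)` times the optimal cost:
`C_E (r χ^{j*} W_conv + W_conv + Σ_{j=1}^{j*} χ^j W_conv) ≤ g(r) · C_E (r W_opt + W_conv + W_opt)`. -/
theorem geometric_checking_cost_bound (r CE Wconv Wopt : ℝ)
    (hr : 0 ≤ r) (hCE : 0 < CE) (hWconv : 0 < Wconv) (hWopt : Wconv ≤ Wopt)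
    (χ : ℝ) (hχ : χ = 1 + (1 + r) ^ (-(1 / 2) : ℝ))
    (j : ℕ) (hj : j = ⌈Real.log (Wopt / Wconv) / Real.log χ⌉₊) :
    CE * (r * χ ^ j * Wconv + Wconv + ∑ i ∈ Finset.Icc 1 j, χ ^ i * Wconv) ≤
      ((2 + r + 2 * Real.sqrt (1 + r)) / (1 + r)) * (CE * (r * Wopt + Wconv + Wopt)) := by
  set s : ℝ := (1 + r) ^ (-(1 / 2) : ℝ) with hs_def
  have h1r : (0:ℝ) < 1 + r := by linarith
  have hs0 : 0 < s := Real.rpow_pos_of_pos h1r _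
  have hs1 : s ≤ 1 := Real.rpow_le_one_of_one_le_of_nonpos (by linarith) (by norm_num)
  have hsq : (1 + r) * s ^ 2 = 1 := by
    have h2 : s ^ 2 = (1 + r) ^ (-1 : ℝ) := by
      rw [hs_def, ← Real.rpow_natCast ((1 + r) ^ (-(1 / 2) : ℝ)) 2,
        ← Real.rpow_mul h1r.le]
      norm_num
    rw [h2, Real.rpow_neg_one]
    field_simp
  have hsqrt : Real.sqrt (1 + r) * s = 1 := by
    rw [Real.sqrt_eq_rpow, hs_def, ← Real.rpow_add h1r]
    norm_num
  have hχ1 : 1 < χ := by rw [hχ]; linarith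
  have hχ0 : 0 < χ := lt_trans one_pos hχ1
  have hlogχ : 0 < Real.log χ := Real.log_pos hχ1
  have ht0 : 0 < Wopt / Wconv := div_pos (lt_of_lt_of_le hWconv hWopt) hWconv
  have ht1 : 1 ≤ Wopt / Wconv := (one_le_div hWconv).mpr hWopt
  have hlog : 0 ≤ Real.log (Wopt / Wconv) / Real.log χ :=
    div_nonneg (Real.log_nonneg ht1) hlogχ.le
  have hjlt : (j : ℝ) < Real.log (Wopt / Wconv) / Real.log χ + 1 := by
    rw [hj]; exact Nat.ceil_lt_add_one hlog
  have hjlog : (j : ℝ) * Real.log χ < Real.log (Wopt / Wconv) + Real.log χ := by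
    have h := mul_lt_mul_of_pos_right hjlt hlogχ
    rw [add_mul, one_mul, div_mul_cancel₀ _ (ne_of_gt hlogχ)] at h
    exact h
  have hpow : χ ^ j ≤ (Wopt / Wconv) * χ := by
    rw [← Real.log_le_log_iff (pow_pos hχ0 j) (by positivity), Real.log_pow,
      Real.log_mul (ne_of_gt ht0) (ne_of_gt hχ0)]
    exact le_of_lt hjlog
  have hA : χ ^ j * Wconv ≤ χ * Wopt := by
    have h := mul_le_mul_of_nonneg_right hpow hWconv.le
    calc χ ^ j * Wconv ≤ (Wopt / Wconv) * χ * Wconv := h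
      _ = χ * Wopt := by field_simp
  have hA1 : (1:ℝ) ≤ χ ^ j := one_le_pow₀ hχ1.le
  have hsum : ∑ i ∈ Finset.Icc 1 j, χ ^ i = χ * ∑ i ∈ Finset.range j, χ ^ i := by
    rw [← Finset.Ico_add_one_right_eq_Icc, Finset.sum_Ico_eq_sum_range]
    simp [pow_add, pow_succ, Finset.mul_sum]
  have hS : (χ - 1) * (∑ i ∈ Finset.Icc 1 j, χ ^ i) = χ * χ ^ j - χ := by
    rw [hsum]
    linear_combination χ * geom_sum_mul χ j
  have hχs : χ - 1 = s := by rw [hχ]; ring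
  rw [hχs] at hS
  rw [hχ] at hS hA hA1 ⊢
  rw [← Finset.sum_mul]
  set S : ℝ := ∑ i ∈ Finset.Icc 1 j, (1 + s) ^ i with hS_def
  set A : ℝ := (1 + s) ^ j with hA_def
  have hq : Real.sqrt (1 + r) = s * (1 + r) := by
    have h := mul_right_cancel₀ (ne_of_gt hs0)
      (show Real.sqrt (1 + r) * s = (s * (1 + r)) * s by
        rw [hsqrt]; linear_combination -hsq)
    exact h
  have hg : (2 + r + 2 * Real.sqrt (1 + r)) / (1 + r) = (1 + s) ^ 2 := by
    rw [hq, div_eq_iff (ne_of_gt h1r)]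
    linear_combination -hsq
  have key : s * (CE * (r * A * Wconv + Wconv + S * Wconv)) ≤
      s * (((2 + r + 2 * Real.sqrt (1 + r)) / (1 + r)) * (CE * (r * Wopt + Wconv + Wopt))) := by
    rw [hg]
    have h1 : s * (CE * (r * A * Wconv + Wconv + S * Wconv))
        = CE * ((s * r + 1 + s) * (A * Wconv)) - CE * Wconv := by
      linear_combination CE * Wconv * hS
    have h2 : CE * ((s * r + 1 + s) * (A * Wconv))
        ≤ CE * ((s * r + 1 + s) * ((1 + s) * Wopt)) := by
      have hc : (0:ℝ) ≤ CE * (s * r + 1 + s) := by positivity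
      calc CE * ((s * r + 1 + s) * (A * Wconv)) = CE * (s * r + 1 + s) * (A * Wconv) := by ring
        _ ≤ CE * (s * r + 1 + s) * ((1 + s) * Wopt) := mul_le_mul_of_nonneg_left hA hc
        _ = CE * ((s * r + 1 + s) * ((1 + s) * Wopt)) := by ring
    have h3 : CE * ((s * r + 1 + s) * ((1 + s) * Wopt))
        = s * ((1 + s) ^ 2 * (CE * (r * Wopt + Wopt))) := by
      linear_combination (-(CE * (1 + s) * Wopt)) * hsq
    have h4 : (0:ℝ) ≤ s * ((1 + s) ^ 2 * (CE * Wconv)) + CE * Wconv := by positivity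
    have h5 : s * ((1 + s) ^ 2 * (CE * (r * Wopt + Wconv + Wopt)))
        = s * ((1 + s) ^ 2 * (CE * (r * Wopt + Wopt))) + s * ((1 + s) ^ 2 * (CE * Wconv)) := by
      ring
    linarith
  exact le_of_mul_le_mul_left key hs0
end
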